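/- The inverse Mill's ratio a ↦ φ(a)/(1 - Φ(a)) is strictly increasing on ℝ, where φ and Φ are the standard normal density and CDF. -/

import Mathlib

/-!
Write `φ` for the density of `N(μ, v)` and `T x = ∫_{t > x} φ t` for its tail. Since
`φ' t = -(t - μ) / v * φ t`, integrating over `(x, ∞)` gives `∫_{t > x} (t - μ) φ t = v φ x`, and
comparing with `(x - μ) T x = ∫_{t > x} (x - μ) φ t` yields the Mills-ratio inequality
`(x - μ) T x < v φ x`. As `T' = -φ`, the derivative of `φ / T` is
`φ (v φ - (x - μ) T) / (v T²)`, which is therefore positive.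
-/

open MeasureTheory ProbabilityTheory Real Set Filter Topology NNReal

/-- The standard normal CDF. -/
noncomputable def stdNormalCDF (x : ℝ) : ℝ :=
  ((gaussianReal 0 1) (Set.Iic x)).toReal

section IntegralIoi

variable {x : ℝ}

theorem hasDerivAt_integral_Ioi {E : Type*} [NormedAddCommGroup E] [NormedSpace ℝ E]
    [CompleteSpace E] {f : ℝ → E} (hf : Integrable f) (hx : ContinuousAt f x) :
    HasDerivAt (fun y => ∫ t in Ioi y, f t) (-f x) x := by
  have h : (fun y => ∫ t in Ioi y, f t) = fun y => (∫ t in Ioi x, f t) - ∫ t in x..y, f t := by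
    funext y
    rw [← intervalIntegral.integral_Ioi_sub_Ioi' hf.integrableOn hf.integrableOn, sub_sub_cancel]
  rw [h]
  exact (intervalIntegral.integral_hasDerivAt_right hf.intervalIntegrable
    hf.aestronglyMeasurable.stronglyMeasurableAtFilter hx).const_sub _

theorem setIntegral_Ioi_pos_of_pos {f : ℝ → ℝ} (hf : IntegrableOn f (Ioi x))
    (hpos : ∀ t ∈ Ioi x, 0 < f t) : 0 < ∫ t in Ioi x, f t := by
  rw [setIntegral_pos_iff_support_of_nonneg_ae
    ((ae_restrict_mem measurableSet_Ioi).mono fun t ht => (hpos t ht).le) hf,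
    inter_eq_right.2 fun t ht => Function.mem_support.2 (hpos t ht).ne', Real.volume_Ioi]
  simp

end IntegralIoi

namespace ProbabilityTheory

variable {μ : ℝ} {v : ℝ≥0}

lemma continuous_gaussianPDFReal : Continuous (gaussianPDFReal μ v) := by
  rw [gaussianPDFReal_def]; fun_prop

lemma hasDerivAt_gaussianPDFReal (x : ℝ) :
    HasDerivAt (gaussianPDFReal μ v) (-((x - μ) / v * gaussianPDFReal μ v x)) x := by
  have h : HasDerivAt (fun t : ℝ => -(t - μ) ^ 2 / (2 * v)) (-((x - μ) / v)) x := by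
    refine ((((hasDerivAt_id x).sub_const μ).pow 2).neg.div_const (2 * (v : ℝ))).congr_deriv ?_
    simp only [id, Nat.cast_ofNat]
    ring
  rw [gaussianPDFReal_def]
  exact (h.exp.const_mul _).congr_deriv (by ring)

lemma integrable_sub_mul_gaussianPDFReal :
    Integrable fun t => (t - μ) * gaussianPDFReal μ v t := by
  rcases eq_or_ne v 0 with rfl | hv
  · simp
  have hb : (0 : ℝ) < 1 / (2 * v) := by positivity
  refine (((integrable_mul_exp_neg_mul_sq hb).comp_sub_right μ).const_mul
    (√(2 * π * v))⁻¹).congr (ae_of_all _ fun t => ?_)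
  simp only [gaussianPDFReal]
  ring_nf

lemma integral_Ioi_sub_mul_gaussianPDFReal (x : ℝ) :
    ∫ t in Ioi x, (t - μ) * gaussianPDFReal μ v t = v * gaussianPDFReal μ v x := by
  rcases eq_or_ne v 0 with rfl | hv
  · simp
  have hderiv (t : ℝ) : HasDerivAt (fun t => -(v * gaussianPDFReal μ v t))
      ((t - μ) * gaussianPDFReal μ v t) t :=
    ((hasDerivAt_gaussianPDFReal t).const_mul (v : ℝ)).neg.congr_deriv (by field_simp)
  have hlim : Tendsto (fun t => -(v * gaussianPDFReal μ v t)) atTop (𝓝 0) :=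
    tendsto_zero_of_hasDerivAt_of_integrableOn_Ioi (a := x) (fun t _ => hderiv t)
      integrable_sub_mul_gaussianPDFReal.integrableOn
      ((integrable_gaussianPDFReal μ v).const_mul v).neg.integrableOn
  rw [integral_Ioi_of_hasDerivAt_of_tendsto' (fun t _ => hderiv t)
    integrable_sub_mul_gaussianPDFReal.integrableOn hlim]
  ring

lemma sub_mul_integral_Ioi_gaussianPDFReal_lt (hv : v ≠ 0) (x : ℝ) :
    (x - μ) * ∫ t in Ioi x, gaussianPDFReal μ v t < v * gaussianPDFReal μ v x := by
  have hint := (integrable_gaussianPDFReal μ v).const_mul (x - μ)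
  have hint' : Integrable fun t => (t - x) * gaussianPDFReal μ v t :=
    ((integrable_sub_mul_gaussianPDFReal (μ := μ) (v := v)).sub hint).congr
      (ae_of_all _ fun t => by simp only [Pi.sub_apply]; ring)
  have hsplit : v * gaussianPDFReal μ v x = (x - μ) * (∫ t in Ioi x, gaussianPDFReal μ v t) +
      ∫ t in Ioi x, (t - x) * gaussianPDFReal μ v t := by
    rw [← integral_Ioi_sub_mul_gaussianPDFReal, ← integral_const_mul,
      ← integral_add hint.integrableOn hint'.integrableOn]
    congr 1 with t
    ring
  have hpos : 0 < ∫ t in Ioi x, (t - x) * gaussianPDFReal μ v t :=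
    setIntegral_Ioi_pos_of_pos hint'.integrableOn
      fun t ht => mul_pos (sub_pos.2 ht) (gaussianPDFReal_pos μ v t hv)
  linarith

theorem strictMono_gaussianPDFReal_div_integral_Ioi (hv : v ≠ 0) :
    StrictMono fun x => gaussianPDFReal μ v x / ∫ t in Ioi x, gaussianPDFReal μ v t := by
  have hint := integrable_gaussianPDFReal μ v
  have htail (x : ℝ) : 0 < ∫ t in Ioi x, gaussianPDFReal μ v t :=
    setIntegral_Ioi_pos_of_pos hint.integrableOn fun t _ => gaussianPDFReal_pos μ v t hv
  refine strictMono_of_hasDerivAt_pos (fun x => (hasDerivAt_gaussianPDFReal x).div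
    (hasDerivAt_integral_Ioi hint continuous_gaussianPDFReal.continuousAt) (htail x).ne')
    fun x => div_pos ?_ (pow_pos (htail x) 2)
  have hv' : (0 : ℝ) < v := by positivity
  have hpdf := gaussianPDFReal_pos μ v x hv
  calc 0 < gaussianPDFReal μ v x / v * (v * gaussianPDFReal μ v x -
        (x - μ) * ∫ t in Ioi x, gaussianPDFReal μ v t) :=
      mul_pos (div_pos hpdf hv') (sub_pos.2 (sub_mul_integral_Ioi_gaussianPDFReal_lt hv x))
    _ = _ := by field_simp; ring

end ProbabilityTheory

lemma one_sub_stdNormalCDF (x : ℝ) : 1 - stdNormalCDF x = ∫ t in Ioi x, gaussianPDFReal 0 1 t := by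
  rw [stdNormalCDF, ← measureReal_def, ← probReal_compl_eq_one_sub measurableSet_Iic, compl_Iic,
    measureReal_def, gaussianReal_apply_eq_integral 0 one_ne_zero, ENNReal.toReal_ofReal
      (setIntegral_nonneg measurableSet_Ioi fun t _ => gaussianPDFReal_nonneg 0 1 t)]

/-- the inverse Mill's ratio a ↦ φ(a)/(1 - Φ(a)) is strictly increasing. -/
theorem stmt2 :
    StrictMono (fun a : ℝ => gaussianPDFReal 0 1 a / (1 - stdNormalCDF a)) := by
  simp_rw [one_sub_stdNormalCDF]
  exact strictMono_gaussianPDFReal_div_integral_Ioi one_ne_zero
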